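/- Suppose there is κ > 0 such that |B|^{1/3} ≥ κ|x_B| for every B ∈ 𝒞 with |x_B| sufficiently large. Then there exists L = L(η,κ) ≥ 2 such that, for every sufficiently large n, every ball B ∈ 𝒞 intersecting the annulus B(0,2n) ∖ B(0,n) satisfies B ⊂ B(0,Ln) and |x_B| ≥ n/L; in particular, at most (4π/3)·σ·L⁶·κ^{−3} balls of 𝒞 intersect B(0,2n) ∖ B(0,n). -/

import Mathlib

open MeasureTheory Real Set Metric Filter
open scoped BigOperators ENNReal

noncomputable section

/-- Three-dimensional Euclidean space. -/
abbrev E3 : Type := EuclideanSpace ℝ (Fin 3)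

/-- The `i`-th standard basis vector of `ℝ³`. -/
def ev3 (i : Fin 3) : E3 := EuclideanSpace.single i (1 : ℝ)

/-- A (closed) ball, encoded by its center and its radius. -/
abbrev BallData : Type := E3 × ℝ

/-- The set of points of a ball. -/
def ballSet (B : BallData) : Set E3 := Metric.closedBall B.1 B.2

/-- The volume `(4π/3) r³` of a ball. -/
def ballVol (B : BallData) : ℝ := (4 * Real.pi / 3) * B.2 ^ 3

/-- A cover `𝒞 = 𝒞^{σ,η}` of `ℝ³` by closed balls of radius `≥ 1` (volume `≥ 4π/3`) such that
(i) each ball intersects at most `σ` other balls of `𝒞`, and (ii) intersecting balls have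
comparable sizes: `1/η ≤ |Q|^{1/3}/|Q'|^{1/3} ≤ η`. -/
structure IsCover (σ η : ℝ) (𝒞 : Set BallData) : Prop where
  radius_ge_one : ∀ B ∈ 𝒞, (1 : ℝ) ≤ B.2
  covers : ∀ x : E3, ∃ B ∈ 𝒞, x ∈ ballSet B
  overlap_finite : ∀ B ∈ 𝒞, {B' | B' ∈ 𝒞 ∧ B' ≠ B ∧ (ballSet B ∩ ballSet B').Nonempty}.Finite
  overlap_card : ∀ B ∈ 𝒞,
    (({B' | B' ∈ 𝒞 ∧ B' ≠ B ∧ (ballSet B ∩ ballSet B').Nonempty}.ncard : ℝ)) ≤ σ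
  comparable_lb : ∀ B ∈ 𝒞, ∀ B' ∈ 𝒞, (ballSet B ∩ ballSet B').Nonempty →
    1 / η ≤ ballVol B ^ ((1:ℝ)/3) / ballVol B' ^ ((1:ℝ)/3)
  comparable_ub : ∀ B ∈ 𝒞, ∀ B' ∈ 𝒞, (ballSet B ∩ ballSet B').Nonempty →
    ballVol B ^ ((1:ℝ)/3) / ballVol B' ^ ((1:ℝ)/3) ≤ η

/-- The union `Q^{(n)}` of the layers `0,…,n` of balls of `𝒞` around `Q`:
`Q^{(0)} = Q` and `Q^{(n+1)} = ⋃ {B ∈ 𝒞 : B ∩ Q^{(n)} ≠ ∅}`. -/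
def layerU (𝒞 : Set BallData) (Q : BallData) : ℕ → Set E3
  | 0 => ballSet Q
  | n + 1 => ⋃ B ∈ {B | B ∈ 𝒞 ∧ (ballSet B ∩ layerU 𝒞 Q n).Nonempty}, ballSet B

/-- The collection `P^{(n)}` of balls in layers `0` to `n`: `P^{(0)} = {Q}` and for `n ≥ 1`,
`P^{(n)} = {B ∈ 𝒞 : B ∩ Q^{(n-1)} ≠ ∅}`. -/
def PColl (𝒞 : Set BallData) (Q : BallData) : ℕ → Set BallData
  | 0 => {Q}
  | n + 1 => {B | B ∈ 𝒞 ∧ (ballSet B ∩ layerU 𝒞 Q n).Nonempty}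

/-- The union `S^{(n)}` of balls of the `n`-th layer: balls contained in `Q^{(n)}` but not
in `Q^{(n-1)}` (for `n ≥ 1`; `n - 1` is truncated subtraction). -/
def SLayer (𝒞 : Set BallData) (Q : BallData) (n : ℕ) : Set E3 :=
  ⋃ B ∈ {B | B ∈ 𝒞 ∧ ballSet B ⊆ layerU 𝒞 Q n ∧ ¬ ballSet B ⊆ layerU 𝒞 Q (n - 1)}, ballSet B

/-- Distance between two subsets of `ℝ³`. -/
def setDistance (A B : Set E3) : ℝ := sInf {d : ℝ | ∃ a ∈ A, ∃ b ∈ B, d = dist a b}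

variable {F : Type} [NormedAddCommGroup F] [NormedSpace ℝ F]

/-- The square of the Morrey-type norm `‖f‖_M`, i.e.
`‖f‖_M² = sup_{B ∈ 𝒞} |B|^{-2/3} ∫_B |f|²`. -/
def MnSq (𝒞 : Set BallData) (f : E3 → F) : ℝ :=
  sSup {a : ℝ | ∃ B ∈ 𝒞, a = ballVol B ^ (-(2:ℝ)/3) * ∫ x in ballSet B, ‖f x‖ ^ 2}

/-- Membership in the space `M = M^{2,2}_𝒞`. -/
def MemM (𝒞 : Set BallData) (f : E3 → F) : Prop :=
  (∀ B ∈ 𝒞, IntegrableOn (fun x => ‖f x‖ ^ 2) (ballSet B) volume) ∧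
  BddAbove {a : ℝ | ∃ B ∈ 𝒞, a = ballVol B ^ (-(2:ℝ)/3) * ∫ x in ballSet B, ‖f x‖ ^ 2}

/-- The Morrey-type norm `‖f‖_M`. -/
def Mn (𝒞 : Set BallData) (f : E3 → F) : ℝ := Real.sqrt (MnSq 𝒞 f)

/-- `|∇f|² = ∑_i |∂_i f|²` (Frobenius norm squared of the spatial gradient). -/
def gradSq (f : E3 → F) (x : E3) : ℝ := ∑ i : Fin 3, ‖fderiv ℝ f x (ev3 i)‖ ^ 2

/-- `α_t[u] = esssup_{0<s<t} ‖u(s)‖_M²`. -/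
def alphaT (𝒞 : Set BallData) (u : ℝ → E3 → F) (t : ℝ) : ℝ :=
  essSup (fun s => MnSq 𝒞 (u s)) (volume.restrict (Ioo 0 t))

/-- `β_t[u] = sup_{B ∈ 𝒞} |B|^{-2/3} ∫₀ᵗ ∫_B |∇u|²`. -/
def betaT (𝒞 : Set BallData) (u : ℝ → E3 → F) (t : ℝ) : ℝ :=
  sSup {a : ℝ | ∃ B ∈ 𝒞,
    a = ballVol B ^ (-(2:ℝ)/3) * ∫ s in Ioc (0:ℝ) t, ∫ x in ballSet B, gradSq (u s) x}

/-- Divergence of a vector field. -/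
def divg (f : E3 → E3) (x : E3) : ℝ := ∑ i : Fin 3, fderiv ℝ f x (ev3 i) i

/-- Laplacian of a scalar function. -/
def lapl (φ : E3 → ℝ) (x : E3) : ℝ :=
  ∑ i : Fin 3, fderiv ℝ (fun y => fderiv ℝ φ y (ev3 i)) x (ev3 i)

/-- The kernel `K_{ij}(z) = ∂_i∂_j (4π|z|)⁻¹ = (3 z_i z_j − δ_{ij}|z|²)/(4π|z|⁵)`. -/
def Kker (i j : Fin 3) (z : E3) : ℝ :=
  (3 * z i * z j - (if i = j then (1:ℝ) else 0) * ‖z‖ ^ 2) / (4 * Real.pi * ‖z‖ ^ 5)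

/-- The kernel `L_j(z) = z_j/(4π|z|³)`. -/
def Lker (j : Fin 3) (z : E3) : ℝ := z j / (4 * Real.pi * ‖z‖ ^ 3)

/-- Weak (distributional) divergence-freeness of a vector field on `ℝ³`. -/
def WeaklyDivFree (f : E3 → E3) : Prop :=
  ∀ φ : E3 → ℝ, ContDiff ℝ (⊤ : ℕ∞) φ → HasCompactSupport φ →
    (∫ x, ∑ i : Fin 3, f x i * fderiv ℝ φ x (ev3 i)) = 0



section Aux

open scoped RealInnerProductSpace

namespace L61

/-- The constant `(4π/3)^{1/3}`, so that `|B|^{1/3} = c0 * r_B`. -/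
noncomputable def c0 : ℝ := (4 * Real.pi / 3) ^ ((1:ℝ)/3)

lemma c0_pos : 0 < c0 := Real.rpow_pos_of_pos (by positivity) _

lemma c0_cube : c0 ^ (3:ℕ) = 4 * Real.pi / 3 := by
  rw [c0, ← Real.rpow_natCast ((4 * Real.pi / 3) ^ ((1:ℝ)/3)) 3,
    ← Real.rpow_mul (by positivity)]
  norm_num

lemma vol13 (B : BallData) (hr : 0 ≤ B.2) : ballVol B ^ ((1:ℝ)/3) = c0 * B.2 := by
  have h3 : ((B.2 ^ (3:ℕ) : ℝ)) ^ ((1:ℝ)/3) = B.2 := by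
    rw [← Real.rpow_natCast B.2 3, ← Real.rpow_mul hr]
    norm_num
  rw [ballVol, Real.mul_rpow (by positivity) (by positivity), h3, c0]

/-- inner radius distance to the origin -/
noncomputable def mn (B : BallData) : ℝ := ‖B.1‖ - B.2

lemma mem_ballSet {B : BallData} {x : E3} : x ∈ ballSet B ↔ dist x B.1 ≤ B.2 := Iff.rfl

lemma mn_le_of_mem {B : BallData} {x : E3} (h : x ∈ ballSet B) : mn B ≤ ‖x‖ := by
  have hd : dist x B.1 ≤ B.2 := h
  have h1 : dist B.1 (0:E3) ≤ dist B.1 x + dist x (0:E3) := dist_triangle _ _ _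
  rw [dist_zero_right, dist_zero_right, dist_comm B.1 x] at h1
  unfold mn; linarith

lemma norm_center_le {B : BallData} {x : E3} (h : x ∈ ballSet B) : ‖B.1‖ ≤ ‖x‖ + B.2 := by
  have := mn_le_of_mem h
  unfold mn at this; linarith

lemma norm_le_of_mem {B : BallData} {x : E3} (h : x ∈ ballSet B) : ‖x‖ ≤ ‖B.1‖ + B.2 := by
  have hd : dist x B.1 ≤ B.2 := h
  have h1 : dist x (0:E3) ≤ dist x B.1 + dist B.1 (0:E3) := dist_triangle _ _ _
  rw [dist_zero_right, dist_zero_right] at h1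
  linarith

lemma exists_mem_norm_le {B : BallData} (hr : 0 ≤ B.2) {ρ : ℝ} (hρ : 0 ≤ ρ) (h : mn B ≤ ρ) :
    ∃ x, x ∈ ballSet B ∧ ‖x‖ ≤ ρ := by
  rcases le_or_gt ‖B.1‖ ρ with hc | hc
  · exact ⟨B.1, by simp [mem_ballSet, hr], hc⟩
  · have hx0 : 0 < ‖B.1‖ := lt_of_le_of_lt hρ hc
    refine ⟨(ρ / ‖B.1‖) • B.1, ?_, ?_⟩
    · rw [mem_ballSet, dist_eq_norm]
      have he : (ρ / ‖B.1‖) • B.1 - B.1 = (ρ / ‖B.1‖ - 1) • B.1 := by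
        rw [sub_smul, one_smul]
      have hle : ρ / ‖B.1‖ - 1 ≤ 0 := by
        have : ρ / ‖B.1‖ < 1 := (div_lt_one hx0).mpr hc
        linarith
      rw [he, norm_smul, Real.norm_eq_abs, abs_of_nonpos hle]
      have hval : -(ρ / ‖B.1‖ - 1) * ‖B.1‖ = ‖B.1‖ - ρ := by
        field_simp; ring
      rw [hval]
      unfold mn at h; linarith
    · rw [norm_smul, Real.norm_eq_abs, abs_of_nonneg (by positivity)]
      rw [div_mul_cancel₀ _ (ne_of_gt hx0)]

lemma inter_cb_of_mn {B : BallData} (hr : 0 ≤ B.2) {ρ : ℝ} (hρ : 0 ≤ ρ) (h : mn B ≤ ρ) :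
    (ballSet B ∩ Metric.closedBall (0:E3) ρ).Nonempty := by
  obtain ⟨x, hx1, hx2⟩ := exists_mem_norm_le hr hρ h
  exact ⟨x, hx1, by simpa [Metric.mem_closedBall, dist_zero_right] using hx2⟩

lemma inter_of_dist {x y : E3} {r s : ℝ} (hr : 0 < r) (hs : 0 < s) (h : dist x y ≤ r + s) :
    (Metric.closedBall x r ∩ Metric.closedBall y s).Nonempty := by
  have hrs : 0 < r + s := by linarith
  refine ⟨x + (r / (r + s)) • (y - x), ?_, ?_⟩
  · rw [Metric.mem_closedBall, dist_eq_norm]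
    have he : x + (r / (r + s)) • (y - x) - x = (r / (r + s)) • (y - x) := by abel
    rw [he, norm_smul, Real.norm_eq_abs, abs_of_nonneg (by positivity)]
    have hxy : ‖y - x‖ ≤ r + s := by
      rw [← dist_eq_norm, dist_comm]; exact h
    calc r / (r + s) * ‖y - x‖ ≤ r / (r + s) * (r + s) := by
          apply mul_le_mul_of_nonneg_left hxy (by positivity)
      _ = r := by field_simp
  · rw [Metric.mem_closedBall, dist_eq_norm]
    have he : x + (r / (r + s)) • (y - x) - y = (r / (r + s) - 1) • (y - x) := by
      rw [sub_smul, one_smul]; abel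
    have hc : r / (r + s) - 1 = -(s / (r+s)) := by
      field_simp; ring
    rw [he, hc, norm_smul, Real.norm_eq_abs, abs_neg, abs_of_nonneg (by positivity)]
    have hxy : ‖y - x‖ ≤ r + s := by rw [← dist_eq_norm, dist_comm]; exact h
    calc s / (r + s) * ‖y - x‖ ≤ s / (r + s) * (r + s) := by
          apply mul_le_mul_of_nonneg_left hxy (by positivity)
      _ = s := by field_simp

lemma smallball_subset {V : BallData} {p : E3} (hp : p ∈ ballSet V) {u : ℝ} (hu : 0 < u)
    (hur : u ≤ V.2) : ∃ m : E3, Metric.closedBall m u ⊆ ballSet V ∧ dist m p ≤ u := by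
  have hd : dist p V.1 ≤ V.2 := hp
  rcases le_or_gt (dist p V.1) u with hc | hc
  · refine ⟨V.1, ?_, by rwa [dist_comm]⟩
    intro q hq
    have h1 : dist q V.1 ≤ u := hq
    exact mem_ballSet.mpr (le_trans h1 hur)
  · have hd0 : 0 < dist p V.1 := lt_trans hu hc
    set d := dist p V.1 with hddef
    have hnorm : ‖V.1 - p‖ = d := by rw [← dist_eq_norm, dist_comm]
    refine ⟨p + (u/d) • (V.1 - p), ?_, ?_⟩
    · intro q hq
      have hqm : dist q (p + (u/d) • (V.1 - p)) ≤ u := hq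
      have hmV : dist (p + (u/d) • (V.1 - p)) V.1 = d - u := by
        rw [dist_eq_norm]
        have he : p + (u/d) • (V.1 - p) - V.1 = (u/d - 1) • (V.1 - p) := by
          rw [sub_smul, one_smul]; abel
        have hle : u/d - 1 ≤ 0 := by
          have : u/d < 1 := (div_lt_one hd0).mpr hc
          linarith
        rw [he, norm_smul, Real.norm_eq_abs, abs_of_nonpos hle, hnorm]
        field_simp; ring
      rw [mem_ballSet]
      calc dist q V.1 ≤ dist q (p + (u/d) • (V.1 - p)) + dist (p + (u/d) • (V.1 - p)) V.1 :=
            dist_triangle _ _ _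
        _ ≤ u + (d - u) := by rw [hmV]; linarith
        _ = d := by ring
        _ ≤ V.2 := hd
    · rw [dist_eq_norm]
      have he : p + (u/d) • (V.1 - p) - p = (u/d) • (V.1 - p) := by abel
      rw [he, norm_smul, Real.norm_eq_abs, abs_of_nonneg (by positivity), hnorm]
      rw [div_mul_cancel₀ _ (ne_of_gt hd0)]

variable {σ η : ℝ} {𝒞 : Set BallData}

lemma one_le_eta (hC : IsCover σ η 𝒞) : 1 ≤ η := by
  obtain ⟨B, hB, h0⟩ := hC.covers 0
  have hr := hC.radius_ge_one B hB
  have h := hC.comparable_ub B hB B hB ⟨0, h0, h0⟩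
  rw [vol13 B (by linarith)] at h
  have hpos : (0:ℝ) < c0 * B.2 := by
    have := c0_pos; nlinarith
  rwa [div_self (ne_of_gt hpos)] at h

lemma radius_le (hC : IsCover σ η 𝒞) {B B' : BallData} (hB : B ∈ 𝒞) (hB' : B' ∈ 𝒞)
    (h : (ballSet B ∩ ballSet B').Nonempty) : B.2 ≤ η * B'.2 := by
  have hr := hC.radius_ge_one B hB
  have hr' := hC.radius_ge_one B' hB'
  have h2 := hC.comparable_ub B hB B' hB' h
  rw [vol13 B (by linarith), vol13 B' (by linarith)] at h2
  have hb' : (0:ℝ) < c0 * B'.2 := by have := c0_pos; nlinarith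
  rw [div_le_iff₀ hb'] at h2
  have := c0_pos
  nlinarith

lemma locfin (hC : IsCover σ η 𝒞) (y : E3) {ρ : ℝ} (hρ : 0 ≤ ρ) :
    {V | V ∈ 𝒞 ∧ (ballSet V ∩ Metric.closedBall y ρ).Nonempty}.Finite := by
  have htb := (isCompact_closedBall y (ρ + 2⁻¹)).totallyBounded
  rw [Metric.totallyBounded_iff] at htb
  obtain ⟨t, htfin, htsub⟩ := htb 4⁻¹ (by norm_num)
  have main : {V | V ∈ 𝒞 ∧ (ballSet V ∩ Metric.closedBall y ρ).Nonempty} ⊆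
      ⋃ p ∈ t, {V | V ∈ 𝒞 ∧ ∃ m ∈ Metric.ball p 4⁻¹, Metric.closedBall m 2⁻¹ ⊆ ballSet V} := by
    rintro V ⟨hV, q, hq1, hq2⟩
    have hr1 := hC.radius_ge_one V hV
    obtain ⟨m, hmsub, hmp⟩ := smallball_subset hq1 (by norm_num : (0:ℝ) < 2⁻¹) (by linarith)
    have hmK : m ∈ Metric.closedBall y (ρ + 2⁻¹) := by
      rw [Metric.mem_closedBall]
      have hqy : dist q y ≤ ρ := hq2
      calc dist m y ≤ dist m q + dist q y := dist_triangle _ _ _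
        _ ≤ 2⁻¹ + ρ := add_le_add hmp hqy
        _ = ρ + 2⁻¹ := by ring
    obtain ⟨p, hp, hmem⟩ := Set.mem_iUnion₂.mp (htsub hmK)
    exact Set.mem_biUnion hp ⟨hV, m, hmem, hmsub⟩
  apply Set.Finite.subset _ main
  apply Set.Finite.biUnion htfin
  intro p _
  by_cases hne : {V | V ∈ 𝒞 ∧ ∃ m ∈ Metric.ball p 4⁻¹,
      Metric.closedBall m 2⁻¹ ⊆ ballSet V}.Nonempty
  · obtain ⟨V₀, hV₀, m₀, hm₀, hsub₀⟩ := hne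
    have hsub : {V | V ∈ 𝒞 ∧ ∃ m ∈ Metric.ball p 4⁻¹, Metric.closedBall m 2⁻¹ ⊆ ballSet V} ⊆
        insert V₀ {B' | B' ∈ 𝒞 ∧ B' ≠ V₀ ∧ (ballSet V₀ ∩ ballSet B').Nonempty} := by
      rintro V ⟨hV, m, hm, hsub⟩
      by_cases hVV : V = V₀
      · exact Set.mem_insert_iff.mpr (Or.inl hVV)
      · refine Set.mem_insert_iff.mpr (Or.inr ⟨hV, hVV, ⟨m, ?_, ?_⟩⟩)
        · apply hsub₀
          rw [Metric.mem_closedBall]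
          have h1 : dist m p < 4⁻¹ := hm
          have h2 : dist p m₀ < 4⁻¹ := by
            rw [dist_comm]; exact hm₀
          calc dist m m₀ ≤ dist m p + dist p m₀ := dist_triangle _ _ _
            _ ≤ 2⁻¹ := by norm_num; linarith
        · exact hsub (Metric.mem_closedBall_self (by norm_num))
    exact Set.Finite.subset ((hC.overlap_finite V₀ hV₀).insert V₀) hsub
  · rw [Set.not_nonempty_iff_eq_empty] at hne
    rw [hne]; exact Set.finite_empty

lemma common_point_card (hC : IsCover σ η 𝒞) (hσ : 0 < σ) (s : Finset BallData)
    (hs : ∀ V ∈ s, V ∈ 𝒞) (x : E3) (hx : ∀ V ∈ s, x ∈ ballSet V) : (s.card : ℝ) ≤ σ + 1 := by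
  classical
  rcases s.eq_empty_or_nonempty with rfl | ⟨V₀, hV₀⟩
  · simp; linarith
  · have hsub : ((s.erase V₀ : Finset BallData) : Set BallData) ⊆
        {B' | B' ∈ 𝒞 ∧ B' ≠ V₀ ∧ (ballSet V₀ ∩ ballSet B').Nonempty} := by
      intro V hV
      rw [Finset.coe_erase, Set.mem_diff] at hV
      obtain ⟨hVs, hVne⟩ := hV
      have hVmem : V ∈ s := hVs
      have hne' : V ≠ V₀ := by simpa using hVne
      exact ⟨hs V hVmem, hne', ⟨x, hx V₀ hV₀, hx V hVmem⟩⟩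
    have h2 : ((s.erase V₀ : Finset BallData) : Set BallData).ncard ≤
        {B' | B' ∈ 𝒞 ∧ B' ≠ V₀ ∧ (ballSet V₀ ∩ ballSet B').Nonempty}.ncard :=
      Set.ncard_le_ncard hsub (hC.overlap_finite V₀ (hs V₀ hV₀))
    rw [Set.ncard_coe_finset] at h2
    have h3 : (((s.erase V₀).card : ℕ) : ℝ) ≤ σ := by
      calc (((s.erase V₀).card : ℕ) : ℝ) ≤
          ({B' | B' ∈ 𝒞 ∧ B' ≠ V₀ ∧ (ballSet V₀ ∩ ballSet B').Nonempty}.ncard : ℝ) := by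
            exact_mod_cast h2
        _ ≤ σ := hC.overlap_card V₀ (hs V₀ hV₀)
    have hcard : s.card = (s.erase V₀).card + 1 := by
      rw [Finset.card_erase_of_mem hV₀]
      have : 1 ≤ s.card := Finset.card_pos.mpr ⟨V₀, hV₀⟩
      omega
    rw [hcard]
    push_cast
    linarith

end L61

end Aux

namespace L61

variable {σ η : ℝ} {𝒞 : Set BallData}

lemma companion (hC : IsCover σ η 𝒞) {Q : BallData} (hQ : Q ∈ 𝒞) (hpos : 0 < mn Q) :
    ∃ V ∈ 𝒞, (ballSet Q ∩ ballSet V).Nonempty ∧ mn V < mn Q ∧ Q.2 ≤ η * V.2 := by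
  classical
  have hr := hC.radius_ge_one Q hQ
  have hx0 : 0 < ‖Q.1‖ := by unfold mn at hpos; linarith
  set τ := mn Q with hτ
  set z : E3 := (τ / ‖Q.1‖) • Q.1 with hz
  have hznorm : ‖z‖ = τ := by
    rw [hz, norm_smul, Real.norm_eq_abs, abs_of_nonneg (by positivity)]
    field_simp
  have hzQ : z ∈ ballSet Q := by
    rw [mem_ballSet, dist_eq_norm]
    have he : z - Q.1 = (τ / ‖Q.1‖ - 1) • Q.1 := by rw [hz, sub_smul, one_smul]
    have hle : τ / ‖Q.1‖ - 1 ≤ 0 := by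
      have : τ ≤ ‖Q.1‖ := by unfold mn at hτ; rw [hτ]; linarith
      have := (div_le_one hx0).mpr this
      linarith
    rw [he, norm_smul, Real.norm_eq_abs, abs_of_nonpos hle]
    have : -(τ / ‖Q.1‖ - 1) * ‖Q.1‖ = ‖Q.1‖ - τ := by field_simp; ring
    rw [this, hτ]; unfold mn; linarith
  -- finite collection near z
  have hT : {V | V ∈ 𝒞 ∧ (ballSet V ∩ Metric.closedBall z 1).Nonempty}.Finite :=
    locfin hC z (by norm_num)
  set G : Set BallData :=
    {V | (V ∈ 𝒞 ∧ (ballSet V ∩ Metric.closedBall z 1).Nonempty) ∧ z ∉ ballSet V} with hG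
  have hGfin : G.Finite := hT.subset (fun V hV => hV.1)
  set S : Set ℝ := insert (1:ℝ) ((fun V : BallData => dist z V.1 - V.2) '' G) with hS
  have hSfin : S.Finite := (hGfin.image _).insert 1
  obtain ⟨δ, hδS, hδmin⟩ := Set.exists_min_image S id hSfin ⟨1, Set.mem_insert _ _⟩
  have hδpos : 0 < δ := by
    rcases hδS with h1 | ⟨V, hVG, rfl⟩
    · rw [h1]; norm_num
    · have hzV : z ∉ ballSet V := hVG.2
      rw [mem_ballSet] at hzV
      push_neg at hzV
      dsimp only
      linarith
  have hδ1 : δ ≤ 1 := hδmin 1 (Set.mem_insert _ _)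
  have hδG : ∀ V ∈ G, δ ≤ dist z V.1 - V.2 := fun V hV =>
    hδmin _ (Set.mem_insert_iff.mpr (Or.inr ⟨V, hV, rfl⟩))
  -- the slightly inner point
  set s : ℝ := δ / (2 * (τ + 1)) with hsdef
  have hs0 : 0 < s := by positivity
  have hs1 : s < 1 := by
    rw [hsdef, div_lt_one (by positivity)]
    nlinarith
  set w : E3 := (1 - s) • z with hw
  have hwz : ‖w - z‖ = s * τ := by
    have he : w - z = (-s) • z := by
      rw [hw, sub_smul, one_smul]; module
    rw [he, norm_smul, Real.norm_eq_abs, abs_neg, abs_of_nonneg hs0.le, hznorm]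
  have hwznorm : ‖w‖ = (1 - s) * τ := by
    rw [hw, norm_smul, Real.norm_eq_abs, abs_of_nonneg (by linarith), hznorm]
  have hwzlt : ‖w - z‖ < δ := by
    rw [hwz, hsdef]
    rw [div_mul_eq_mul_div, div_lt_iff₀ (by positivity)]
    nlinarith
  obtain ⟨V, hV, hwV⟩ := hC.covers w
  have hVT : V ∈ 𝒞 ∧ (ballSet V ∩ Metric.closedBall z 1).Nonempty := by
    refine ⟨hV, ⟨w, hwV, ?_⟩⟩
    rw [Metric.mem_closedBall, dist_eq_norm]
    exact le_trans hwzlt.le hδ1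
  have hzV : z ∈ ballSet V := by
    by_contra hzV
    have hVG : V ∈ G := ⟨hVT, hzV⟩
    have h1 := hδG V hVG
    have h2 : dist w V.1 ≤ V.2 := hwV
    have h3 : dist z V.1 ≤ dist z w + dist w V.1 := dist_triangle _ _ _
    have h5 : dist z w = ‖w - z‖ := by rw [dist_eq_norm, norm_sub_rev]
    have h6 : δ ≤ dist z V.1 - V.2 := h1
    linarith [hwzlt]
  refine ⟨V, hV, ⟨z, hzQ, hzV⟩, ?_, radius_le hC hQ hV ⟨z, hzQ, hzV⟩⟩
  calc mn V ≤ ‖w‖ := mn_le_of_mem hwV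
    _ = (1 - s) * τ := hwznorm
    _ < τ := by nlinarith

lemma band (hC : IsCover σ η 𝒞) {R₁ s₀ n β : ℝ} (hs₀ : 0 ≤ s₀)
    (hA : ∀ V ∈ 𝒞, (ballSet V ∩ Metric.closedBall (0:E3) s₀).Nonempty → V.2 ≤ R₁)
    (hn1 : R₁ ≤ n) (hn : 0 < n) (hβ : 20 * (1 + η) * n ≤ β)
    (hex : ∃ Q, Q ∈ 𝒞 ∧ mn Q ≤ 2*n ∧ β ≤ Q.2) :
    ∃ C, C ∈ 𝒞 ∧ mn C ≤ 2*n ∧ β / (1 + η) ≤ C.2 ∧ C.2 < β := by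
  have hη1 : 1 ≤ η := one_le_eta hC
  have hηη : (0:ℝ) < 1 + η := by linarith
  set F : Set BallData := {Q | Q ∈ 𝒞 ∧ mn Q ≤ 2*n ∧ β ≤ Q.2} with hF
  have hFfin : F.Finite := by
    apply Set.Finite.subset (locfin hC 0 (show (0:ℝ) ≤ 2*n by linarith))
    rintro Q ⟨hQ, hmn, _⟩
    exact ⟨hQ, inter_cb_of_mn (by linarith [hC.radius_ge_one Q hQ]) (by linarith) hmn⟩
  have hFne : F.Nonempty := hex
  obtain ⟨M, hMF, hMmin⟩ := Set.exists_min_image F mn hFfin hFne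
  obtain ⟨hM𝒞, hMmn, hMr⟩ := hMF
  have hβpos : 0 < β := by nlinarith
  have hMs₀ : s₀ < mn M := by
    by_contra hle
    push_neg at hle
    have h1 := hA M hM𝒞 (inter_cb_of_mn (by linarith [hC.radius_ge_one M hM𝒞]) hs₀ hle)
    nlinarith
  obtain ⟨V, hV𝒞, hVint, hVmn, hVr⟩ := companion hC hM𝒞 (lt_of_le_of_lt hs₀ hMs₀)
  refine ⟨V, hV𝒞, le_trans hVmn.le hMmn, ?_, ?_⟩
  · rw [div_le_iff₀ hηη]
    have h1V := hC.radius_ge_one V hV𝒞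
    nlinarith
  · by_contra hge
    push_neg at hge
    have hVF : V ∈ F := ⟨hV𝒞, le_trans hVmn.le hMmn, hge⟩
    have := hMmin V hVF
    linarith

end L61

namespace L61

open scoped RealInnerProductSpace

variable {σ η : ℝ} {𝒞 : Set BallData}

lemma anti {x x' : E3} {r r' n : ℝ} (hn : 0 < n)
    (h0 : r < ‖x‖) (h0' : r' < ‖x'‖) (hm : ‖x‖ - r ≤ 2*n) (hm' : ‖x'‖ - r' ≤ 2*n)
    (hr : 20*n ≤ r) (hr' : 20*n ≤ r') (hd : r + r' < dist x x') :
    ⟪x, x'⟫ < -(1/3) * (‖x‖ * ‖x'‖) := by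
  have hexp : ‖x - x'‖^2 = ‖x‖^2 - 2*⟪x,x'⟫ + ‖x'‖^2 := norm_sub_sq_real x x'
  have hdist : dist x x' = ‖x - x'‖ := dist_eq_norm x x'
  have hrr : (0:ℝ) ≤ r + r' := by linarith
  have h2 : (r+r')^2 < ‖x - x'‖^2 := by
    rw [hdist] at hd
    nlinarith [norm_nonneg (x - x')]
  have ha : 0 < ‖x‖ := by linarith
  have ha' : 0 < ‖x'‖ := by linarith
  nlinarith [h2, hexp, mul_pos ha ha', sq_nonneg n,
    mul_nonneg (by linarith : (0:ℝ) ≤ r - 20*n) (by linarith : (0:ℝ) ≤ r' - 20*n),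
    mul_nonneg (by linarith : (0:ℝ) ≤ r + 2*n - ‖x‖) (by linarith : (0:ℝ) ≤ r' + 2*n - ‖x'‖),
    mul_nonneg (by linarith : (0:ℝ) ≤ r + 2*n - ‖x‖) ha'.le,
    mul_nonneg (by linarith : (0:ℝ) ≤ r' + 2*n - ‖x'‖) ha.le,
    mul_nonneg (by linarith : (0:ℝ) ≤ r - 20*n) ha'.le,
    mul_nonneg (by linarith : (0:ℝ) ≤ r' - 20*n) ha.le,
    mul_nonneg (by linarith : (0:ℝ) ≤ r - 20*n) hn.le,
    mul_nonneg (by linarith : (0:ℝ) ≤ r' - 20*n) hn.le,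
    mul_nonneg hn.le ha.le, mul_nonneg hn.le ha'.le]

lemma no_four {x₁ x₂ x₃ x₄ : E3} (h₁ : 0 < ‖x₁‖) (h₂ : 0 < ‖x₂‖) (h₃ : 0 < ‖x₃‖)
    (h₄ : 0 < ‖x₄‖)
    (h12 : ⟪x₁,x₂⟫ < -(1/3) * (‖x₁‖ * ‖x₂‖)) (h13 : ⟪x₁,x₃⟫ < -(1/3) * (‖x₁‖ * ‖x₃‖))
    (h14 : ⟪x₁,x₄⟫ < -(1/3) * (‖x₁‖ * ‖x₄‖)) (h23 : ⟪x₂,x₃⟫ < -(1/3) * (‖x₂‖ * ‖x₃‖))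
    (h24 : ⟪x₂,x₄⟫ < -(1/3) * (‖x₂‖ * ‖x₄‖)) (h34 : ⟪x₃,x₄⟫ < -(1/3) * (‖x₃‖ * ‖x₄‖)) :
    False := by
  set u₁ : E3 := ‖x₁‖⁻¹ • x₁ with hu₁
  set u₂ : E3 := ‖x₂‖⁻¹ • x₂ with hu₂
  set u₃ : E3 := ‖x₃‖⁻¹ • x₃ with hu₃
  set u₄ : E3 := ‖x₄‖⁻¹ • x₄ with hu₄
  have hn : ∀ (x : E3) (c : ℝ), 0 ≤ c → c * ‖x‖ = 1 → ‖c • x‖ = 1 := by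
    intro x c hc h
    rw [norm_smul, Real.norm_eq_abs, abs_of_nonneg hc, h]
  have key : ∀ (x y : E3) (a b : ℝ), 0 < a → 0 < b → ⟪x,y⟫ < -(1/3) * (a * b) →
      ⟪a⁻¹ • x, b⁻¹ • y⟫ < -(1/3) := by
    intro x y a b hx hy h
    rw [real_inner_smul_left, real_inner_smul_right]
    have hxy : 0 < a * b := mul_pos hx hy
    rw [show a⁻¹ * (b⁻¹ * ⟪x,y⟫) = ⟪x,y⟫ / (a * b) by field_simp]
    rw [div_lt_iff₀ hxy]
    nlinarith
  have k12 := key _ _ _ _ h₁ h₂ h12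
  have k13 := key _ _ _ _ h₁ h₃ h13
  have k14 := key _ _ _ _ h₁ h₄ h14
  have k23 := key _ _ _ _ h₂ h₃ h23
  have k24 := key _ _ _ _ h₂ h₄ h24
  have k34 := key _ _ _ _ h₃ h₄ h34
  have hu1 : ‖u₁‖ = 1 := hn _ _ (by positivity) (inv_mul_cancel₀ h₁.ne')
  have hu2 : ‖u₂‖ = 1 := hn _ _ (by positivity) (inv_mul_cancel₀ h₂.ne')
  have hu3 : ‖u₃‖ = 1 := hn _ _ (by positivity) (inv_mul_cancel₀ h₃.ne')
  have hu4 : ‖u₄‖ = 1 := hn _ _ (by positivity) (inv_mul_cancel₀ h₄.ne')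
  have n1 : ⟪u₁,u₁⟫ = 1 := by rw [real_inner_self_eq_norm_sq, hu1]; norm_num
  have n2 : ⟪u₂,u₂⟫ = 1 := by rw [real_inner_self_eq_norm_sq, hu2]; norm_num
  have n3 : ⟪u₃,u₃⟫ = 1 := by rw [real_inner_self_eq_norm_sq, hu3]; norm_num
  have n4 : ⟪u₄,u₄⟫ = 1 := by rw [real_inner_self_eq_norm_sq, hu4]; norm_num
  have c21 := real_inner_comm u₂ u₁
  have c31 := real_inner_comm u₃ u₁
  have c41 := real_inner_comm u₄ u₁
  have c32 := real_inner_comm u₃ u₂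
  have c42 := real_inner_comm u₄ u₂
  have c43 := real_inner_comm u₄ u₃
  have hpos : (0:ℝ) ≤ ⟪u₁+u₂+u₃+u₄, u₁+u₂+u₃+u₄⟫ := real_inner_self_nonneg
  simp only [inner_add_left, inner_add_right] at hpos
  linarith

lemma kappa_lt (hC : IsCover σ η 𝒞) {κ R₀ s₀ R₁ : ℝ} (hκ : 0 < κ)
    (hyp : ∀ B ∈ 𝒞, R₀ ≤ ‖B.1‖ → κ * ‖B.1‖ ≤ ballVol B ^ ((1:ℝ)/3))
    (hR₀s : R₀ ≤ s₀) (hs₀ : 0 ≤ s₀)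
    (hA : ∀ V ∈ 𝒞, (ballSet V ∩ Metric.closedBall (0:E3) s₀).Nonempty → V.2 ≤ R₁)
    (hR₁ : 1 ≤ R₁) : κ < c0 := by
  set t : ℝ := 2*(s₀ + R₁ + 1) with ht
  have ht0 : 0 < t := by positivity
  obtain ⟨V, hV, hyV⟩ := hC.covers (t • ev3 0)
  have hone : ‖ev3 0‖ = 1 := by
    rw [ev3, EuclideanSpace.norm_single]; norm_num
  have hnt : ‖t • ev3 0‖ = t := by
    rw [norm_smul, Real.norm_eq_abs, abs_of_nonneg ht0.le, hone, mul_one]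
  have hr1 := hC.radius_ge_one V hV
  have hVx : t ≤ V.2 + ‖V.1‖ := by
    have h1 : dist (t • ev3 0) (0:E3) ≤ dist (t • ev3 0) V.1 + dist V.1 (0:E3) :=
      dist_triangle _ _ _
    rw [dist_zero_right, dist_zero_right, hnt] at h1
    have h2 : dist (t • ev3 0) V.1 ≤ V.2 := hyV
    linarith
  by_cases hcase : (ballSet V ∩ Metric.closedBall (0:E3) s₀).Nonempty
  · have hVr : V.2 ≤ R₁ := hA V hV hcase
    have hxR₀ : R₀ ≤ ‖V.1‖ := by linarith
    have h := hyp V hV hxR₀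
    rw [vol13 V (by linarith)] at h
    have := c0_pos
    nlinarith
  · have hmn : s₀ < mn V := by
      by_contra hle
      push_neg at hle
      exact hcase (inter_cb_of_mn (by linarith) hs₀ hle)
    have h1 : V.2 + s₀ < ‖V.1‖ := by unfold mn at hmn; linarith
    have hxR₀ : R₀ ≤ ‖V.1‖ := by linarith
    have h := hyp V hV hxR₀
    rw [vol13 V (by linarith)] at h
    have := c0_pos
    nlinarith

lemma count (hC : IsCover σ η 𝒞) (hσ : 0 < σ) (s : Finset BallData) (hs : ∀ V ∈ s, V ∈ 𝒞)
    {u R : ℝ} (hu : 0 < u) (hR : 0 ≤ R)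
    (hm : ∀ V ∈ s, ∃ m : E3, Metric.closedBall m u ⊆ ballSet V ∩ Metric.closedBall (0:E3) R) :
    (s.card : ℝ) * u ^ 3 ≤ (σ + 1) * R ^ 3 := by
  classical
  have hf : ∃ f : BallData → E3, ∀ V ∈ s,
      Metric.closedBall (f V) u ⊆ ballSet V ∩ Metric.closedBall (0:E3) R := by
    choose g hg using hm
    refine ⟨fun V => if h : V ∈ s then g V h else 0, fun V hV => ?_⟩
    simp only [dif_pos hV]
    exact hg V hV
  obtain ⟨f, hf⟩ := hf
  set K := Metric.closedBall (0:E3) R with hK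
  have hmsV : ∀ V : BallData, MeasurableSet (ballSet V) := fun V => measurableSet_closedBall
  have hvol : ∀ m : E3, volume (Metric.closedBall m u) = volume (Metric.closedBall (0:E3) u) :=
    fun m => by rw [EuclideanSpace.volume_closedBall, EuclideanSpace.volume_closedBall]
  have key : (s.card : ℝ≥0∞) * volume (Metric.closedBall (0:E3) u) ≤
      ENNReal.ofReal (σ+1) * volume K := by
    have e1 : (s.card : ℝ≥0∞) * volume (Metric.closedBall (0:E3) u) =
        ∑ V ∈ s, volume (Metric.closedBall (f V) u) := by
      rw [Finset.sum_congr rfl (fun V _ => hvol (f V)), Finset.sum_const, nsmul_eq_mul]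
    rw [e1]
    calc ∑ V ∈ s, volume (Metric.closedBall (f V) u)
        ≤ ∑ V ∈ s, volume (ballSet V ∩ K) :=
          Finset.sum_le_sum (fun V hV => measure_mono (hf V hV))
      _ = ∑ V ∈ s, ∫⁻ x, (ballSet V).indicator (fun _ => 1) x ∂(volume.restrict K) := by
          refine Finset.sum_congr rfl fun V _ => ?_
          rw [lintegral_indicator (hmsV V), setLIntegral_one, Measure.restrict_apply (hmsV V)]
      _ = ∫⁻ x, (∑ V ∈ s, (ballSet V).indicator (fun _ => 1) x) ∂(volume.restrict K) :=
          (lintegral_finset_sum s (fun V _ => (measurable_one.indicator (hmsV V)))).symm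
      _ ≤ ∫⁻ _x, ENNReal.ofReal (σ+1) ∂(volume.restrict K) := by
          apply lintegral_mono
          intro x
          dsimp only
          have hsum : (∑ V ∈ s, (ballSet V).indicator (fun _ => (1:ℝ≥0∞)) x)
              = ((s.filter (fun V => x ∈ ballSet V)).card : ℝ≥0∞) := by
            rw [Finset.card_filter]
            push_cast
            refine Finset.sum_congr rfl fun V _ => ?_
            by_cases h : x ∈ ballSet V <;> simp [Set.indicator_apply, h]
          rw [hsum]
          have hcard := common_point_card hC hσ (s.filter (fun V => x ∈ ballSet V))
            (fun V hV => hs V (Finset.mem_filter.mp hV).1) x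
            (fun V hV => (Finset.mem_filter.mp hV).2)
          calc ((s.filter (fun V => x ∈ ballSet V)).card : ℝ≥0∞)
              = ENNReal.ofReal ((s.filter (fun V => x ∈ ballSet V)).card : ℝ) := by
                rw [ENNReal.ofReal_natCast]
            _ ≤ ENNReal.ofReal (σ+1) := ENNReal.ofReal_le_ofReal hcard
      _ = ENNReal.ofReal (σ+1) * volume K := by
          rw [lintegral_const, Measure.restrict_apply_univ]
  rw [EuclideanSpace.volume_closedBall, hK, EuclideanSpace.volume_closedBall] at key
  have hGpos : 0 < Real.sqrt Real.pi ^ (Fintype.card (Fin 3)) /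
      Real.Gamma ((Fintype.card (Fin 3)) / 2 + 1) := by
    apply div_pos
    · exact pow_pos (Real.sqrt_pos.mpr Real.pi_pos) _
    · apply Real.Gamma_pos_of_pos
      simp [Fintype.card_fin]
      norm_num
  set C : ℝ≥0∞ := ENNReal.ofReal (Real.sqrt Real.pi ^ (Fintype.card (Fin 3)) /
      Real.Gamma ((Fintype.card (Fin 3)) / 2 + 1)) with hCdef
  have hC0 : C ≠ 0 := by
    rw [hCdef]
    exact (ENNReal.ofReal_pos.mpr hGpos).ne'
  have hCT : C ≠ ⊤ := by rw [hCdef]; exact ENNReal.ofReal_ne_top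
  rw [← mul_assoc, ← mul_assoc] at key
  have key2 := (ENNReal.mul_le_mul_iff_left hC0 hCT).mp key
  simp only [Fintype.card_fin] at key2
  have hcl : ((s.card : ℝ≥0∞) * (ENNReal.ofReal u)^3) = ENNReal.ofReal ((s.card : ℝ) * u^3) := by
    rw [ENNReal.ofReal_mul (by positivity), ENNReal.ofReal_pow hu.le, ENNReal.ofReal_natCast]
  have hcr : (ENNReal.ofReal (σ+1) * (ENNReal.ofReal R)^3) = ENNReal.ofReal ((σ+1) * R^3) := by
    rw [ENNReal.ofReal_mul (by linarith), ENNReal.ofReal_pow hR]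
  rw [hcl, hcr] at key2
  exact (ENNReal.ofReal_le_ofReal_iff (by positivity)).mp key2

end L61

namespace L61

open scoped RealInnerProductSpace

variable {σ η : ℝ} {𝒞 : Set BallData}

lemma sigma_ge_one (hC : IsCover σ η 𝒞) : 1 ≤ σ := by
  classical
  obtain ⟨B, hB, B', hB', hne, hint⟩ :
      ∃ B, B ∈ 𝒞 ∧ ∃ B', B' ∈ 𝒞 ∧ B' ≠ B ∧ (ballSet B ∩ ballSet B').Nonempty := by
    by_contra hno
    push_neg at hno
    obtain ⟨Q₀, hQ₀, h0Q₀⟩ := hC.covers 0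
    have hr₀ := hC.radius_ge_one Q₀ hQ₀
    set e : E3 := ev3 0 with he
    have hone : ‖e‖ = 1 := by
      rw [he, ev3, EuclideanSpace.norm_single]; norm_num
    have hdist : ∀ s : ℝ, dist (Q₀.1 + s • e) Q₀.1 = |s| := by
      intro s
      rw [dist_eq_norm]
      have h1 : Q₀.1 + s • e - Q₀.1 = s • e := by abel
      rw [h1, norm_smul, Real.norm_eq_abs, hone, mul_one]
    have hyQ : ∀ t : ℝ, 0 < t → (Q₀.1 + (Q₀.2 + t) • e) ∉ ballSet Q₀ := by
      intro t ht hmem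
      have h1 : dist (Q₀.1 + (Q₀.2 + t) • e) Q₀.1 ≤ Q₀.2 := hmem
      rw [hdist, abs_of_nonneg (by linarith)] at h1
      linarith
    have claim : ∀ t : ℝ, 0 < t → t ≤ 16⁻¹ → ∀ V, V ∈ 𝒞 →
        (Q₀.1 + (Q₀.2 + t) • e) ∈ ballSet V → (Q₀.1 + (Q₀.2 + 2⁻¹) • e) ∈ ballSet V := by
      intro t ht ht16 V hV hyV
      have hρ := hC.radius_ge_one V hV
      have hVne : V ≠ Q₀ := by
        intro hEq
        exact hyQ t ht (hEq ▸ hyV)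
      have hdisj : ¬ (ballSet Q₀ ∩ ballSet V).Nonempty := by
        rw [hno Q₀ hQ₀ V hV hVne]
        exact Set.not_nonempty_empty
      have hdd : Q₀.2 + V.2 < dist Q₀.1 V.1 := by
        by_contra hle
        push_neg at hle
        exact hdisj (inter_of_dist (by linarith) (by linarith) hle)
      set d : E3 := V.1 - Q₀.1 with hd
      set α : ℝ := ⟪d, e⟫ with hα
      have hsq : ∀ s : ℝ, ‖d - s • e‖^2 = ‖d‖^2 - 2*(s*α) + s^2 := by
        intro s
        rw [norm_sub_sq_real, real_inner_smul_right, norm_smul, Real.norm_eq_abs, hone,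
          mul_one, sq_abs]
      have hdistV : ∀ s : ℝ, dist (Q₀.1 + s • e) V.1 = ‖d - s • e‖ := by
        intro s
        rw [dist_eq_norm]
        have h1 : Q₀.1 + s • e - V.1 = -(d - s • e) := by rw [hd]; abel
        rw [h1, norm_neg]
      have hA : ‖d‖^2 - 2*((Q₀.2 + t)*α) + (Q₀.2 + t)^2 ≤ V.2^2 := by
        have h1 : dist (Q₀.1 + (Q₀.2 + t) • e) V.1 ≤ V.2 := hyV
        rw [hdistV] at h1
        have h3 : ‖d - (Q₀.2 + t) • e‖^2 ≤ V.2^2 := by nlinarith [norm_nonneg (d - (Q₀.2 + t) • e)]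
        rw [hsq] at h3
        linarith
      have hB2 : (Q₀.2 + V.2)^2 < ‖d‖^2 := by
        have h5 : dist Q₀.1 V.1 = ‖d‖ := by rw [dist_eq_norm, hd, norm_sub_rev]
        rw [h5] at hdd
        nlinarith [norm_nonneg d]
      have hαlb : (Q₀.2 + t) + (Q₀.2 + 2⁻¹) ≤ 2*α := by
        have h6 : (Q₀.2 + t) * ((Q₀.2 + t) + (Q₀.2 + 2⁻¹)) ≤ (Q₀.2 + t) * (2*α) := by
          nlinarith [hA, hB2, mul_nonneg (by linarith : (0:ℝ) ≤ Q₀.2) (by linarith : (0:ℝ) ≤ V.2 - 1),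
            mul_nonneg (by linarith : (0:ℝ) ≤ Q₀.2 - 1) ht.le,
            mul_nonneg (by linarith : (0:ℝ) ≤ Q₀.2) (by linarith : (0:ℝ) ≤ 16⁻¹ - t)]
        exact le_of_mul_le_mul_left h6 (by linarith)
      have hgoal2 : ‖d - (Q₀.2 + 2⁻¹) • e‖^2 ≤ V.2^2 := by
        rw [hsq]
        nlinarith [hA, hαlb, mul_nonneg (by linarith : (0:ℝ) ≤ 2⁻¹ - t)
          (by linarith : (0:ℝ) ≤ 2*α - ((Q₀.2 + t) + (Q₀.2 + 2⁻¹)))]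
      have hfin : ‖d - (Q₀.2 + 2⁻¹) • e‖ ≤ V.2 := by
        nlinarith [norm_nonneg (d - (Q₀.2 + 2⁻¹) • e), hgoal2]
      have h2 : dist (Q₀.1 + (Q₀.2 + 2⁻¹) • e) V.1 ≤ V.2 := by rw [hdistV]; exact hfin
      exact h2
    have hQt : ∀ t : ℝ, ∃ V, V ∈ 𝒞 ∧ (Q₀.1 + (Q₀.2 + t) • e) ∈ ballSet V := by
      intro t
      obtain ⟨V, hV, h⟩ := hC.covers (Q₀.1 + (Q₀.2 + t) • e)
      exact ⟨V, hV, h⟩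
    choose Qf hQf1 hQf2 using hQt
    have hsame : ∀ t : ℝ, 0 < t → t ≤ 16⁻¹ → Qf t = Qf 16⁻¹ := by
      intro t h1 h2
      by_contra hne2
      have hw1 := claim t h1 h2 (Qf t) (hQf1 t) (hQf2 t)
      have hw2 := claim 16⁻¹ (by norm_num) (le_refl _) (Qf 16⁻¹) (hQf1 16⁻¹) (hQf2 16⁻¹)
      have h := hno (Qf 16⁻¹) (hQf1 16⁻¹) (Qf t) (hQf1 t) hne2
      rw [Set.eq_empty_iff_forall_notMem] at h
      exact h _ ⟨hw2, hw1⟩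
    set T := Qf 16⁻¹ with hT
    set z₀ : E3 := Q₀.1 + Q₀.2 • e with hz₀
    have hz₀T : z₀ ∈ ballSet T := by
      by_contra hnot
      have hnot' : T.2 < dist z₀ T.1 := by
        rw [mem_ballSet] at hnot
        push_neg at hnot
        exact hnot
      set δ : ℝ := dist z₀ T.1 - T.2 with hδ
      have hδ0 : 0 < δ := by rw [hδ]; linarith
      set t : ℝ := min (δ/2) 16⁻¹ with htdef
      have ht0 : 0 < t := lt_min (by linarith) (by norm_num)
      have ht16 : t ≤ 16⁻¹ := min_le_right _ _
      have htδ : t ≤ δ/2 := min_le_left _ _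
      have hyt : (Q₀.1 + (Q₀.2 + t) • e) ∈ ballSet T := by
        rw [← hsame t ht0 ht16]
        exact hQf2 t
      have hd1 : dist (Q₀.1 + (Q₀.2 + t) • e) T.1 ≤ T.2 := hyt
      have hd2 : dist z₀ (Q₀.1 + (Q₀.2 + t) • e) = t := by
        rw [dist_eq_norm]
        have h1 : z₀ - (Q₀.1 + (Q₀.2 + t) • e) = (-t) • e := by
          rw [hz₀]; module
        rw [h1, norm_smul, Real.norm_eq_abs, abs_neg, abs_of_nonneg ht0.le, hone, mul_one]
      have h3 := dist_triangle z₀ (Q₀.1 + (Q₀.2 + t) • e) T.1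
      rw [hd2] at h3
      linarith
    have hz₀Q₀ : z₀ ∈ ballSet Q₀ := by
      have h1 : dist z₀ Q₀.1 ≤ Q₀.2 := by
        rw [hz₀, hdist, abs_of_nonneg (by linarith)]
      exact h1
    have hTne : T ≠ Q₀ := by
      intro hEq
      exact hyQ 16⁻¹ (by norm_num) (hEq ▸ hQf2 16⁻¹)
    have h := hno Q₀ hQ₀ T (hQf1 16⁻¹) hTne
    rw [Set.eq_empty_iff_forall_notMem] at h
    exact h z₀ ⟨hz₀Q₀, hz₀T⟩
  have hfin := hC.overlap_finite B hB
  have hnonempty : {B'' | B'' ∈ 𝒞 ∧ B'' ≠ B ∧ (ballSet B ∩ ballSet B'').Nonempty}.Nonempty :=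
    ⟨B', hB', hne, hint⟩
  have hpos := (Set.ncard_pos hfin).mpr hnonempty
  have h1 : (1:ℝ) ≤ ({B'' | B'' ∈ 𝒞 ∧ B'' ≠ B ∧ (ballSet B ∩ ballSet B'').Nonempty}.ncard : ℝ) := by
    exact_mod_cast hpos
  linarith [hC.overlap_card B hB]

end L61

set_option maxHeartbeats 1600000 in
/-- Lemma 6.1: if `|B|^{1/3} ≥ κ |x_B|` for all `B ∈ 𝒞` with `|x_B|` sufficiently large,
then there is `L = L(η,κ) ≥ 2` such that, for all sufficiently large `n`, every `B ∈ 𝒞`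
intersecting the annulus `B(0,2n) ∖ B(0,n)` satisfies `B ⊆ B(0,Ln)` and `|x_B| ≥ n/L`;
in particular at most `(4π/3) σ L⁶ κ⁻³` balls of `𝒞` intersect the annulus. -/
theorem finitely_many_balls_in_annulus (η κ : ℝ) (hη : 0 < η) (hκ : 0 < κ) :
    ∃ L : ℝ, 2 ≤ L ∧
      ∀ σ : ℝ, 0 < σ → ∀ 𝒞 : Set BallData, IsCover σ η 𝒞 →
      (∃ R₀ : ℝ, ∀ B ∈ 𝒞, R₀ ≤ ‖B.1‖ → κ * ‖B.1‖ ≤ ballVol B ^ ((1:ℝ)/3)) →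
      ∃ n₀ : ℝ, ∀ n : ℝ, n₀ ≤ n →
        (∀ B ∈ 𝒞,
          (ballSet B ∩ (Metric.closedBall (0:E3) (2 * n) \ Metric.ball (0:E3) n)).Nonempty →
          ballSet B ⊆ Metric.closedBall (0:E3) (L * n) ∧ n / L ≤ ‖B.1‖) ∧
        {B | B ∈ 𝒞 ∧
          (ballSet B ∩ (Metric.closedBall (0:E3) (2 * n) \ Metric.ball (0:E3) n)).Nonempty}.Finite ∧
        (({B | B ∈ 𝒞 ∧
          (ballSet B ∩ (Metric.closedBall (0:E3) (2 * n) \ Metric.ball (0:E3) n)).Nonempty}.ncard : ℝ)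
            ≤ (4 * Real.pi / 3) * σ * L ^ 6 / κ ^ 3) := by
  classical
  have hP1 : (1:ℝ) ≤ 1 + η := by linarith
  set P : ℝ := 1 + η with hPdef
  have hP0 : (0:ℝ) < P := by rw [hPdef]; linarith
  have hP16 : (1:ℝ) ≤ P^16 := one_le_pow₀ hP1
  have hP15 : (1:ℝ) ≤ P^15 := one_le_pow₀ hP1
  set L : ℝ := 60 * P^16 with hLdef
  have hL2 : (2:ℝ) ≤ L := by rw [hLdef]; nlinarith
  have hL60 : (60:ℝ) ≤ L := by rw [hLdef]; nlinarith
  have hL0 : (0:ℝ) < L := by linarith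
  refine ⟨L, hL2, ?_⟩
  intro σ hσ 𝒞 hC hyp
  obtain ⟨R₀, hκcond⟩ := hyp
  have hη1 : 1 ≤ η := L61.one_le_eta hC
  have hP2 : (2:ℝ) ≤ P := by rw [hPdef]; linarith
  have hσ1 : (1:ℝ) ≤ σ := L61.sigma_ge_one hC
  set s₀ : ℝ := max R₀ 1 with hs₀def
  have hs₀1 : (1:ℝ) ≤ s₀ := le_max_right _ _
  have hs₀0 : (0:ℝ) ≤ s₀ := by linarith
  have hs₀R : R₀ ≤ s₀ := le_max_left _ _
  have hAfin : {V | V ∈ 𝒞 ∧ (ballSet V ∩ Metric.closedBall (0:E3) s₀).Nonempty}.Finite :=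
    L61.locfin hC 0 hs₀0
  set R₁ : ℝ := sSup ((fun V : BallData => V.2) ''
    {V | V ∈ 𝒞 ∧ (ballSet V ∩ Metric.closedBall (0:E3) s₀).Nonempty}) with hR₁def
  have hA : ∀ V ∈ 𝒞, (ballSet V ∩ Metric.closedBall (0:E3) s₀).Nonempty → V.2 ≤ R₁ := by
    intro V hV hint
    exact le_csSup ((hAfin.image _).bddAbove) ⟨V, ⟨hV, hint⟩, rfl⟩
  have hR₁1 : (1:ℝ) ≤ R₁ := by
    obtain ⟨Q₀, hQ₀, h0⟩ := hC.covers 0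
    have h0' : (0:E3) ∈ Metric.closedBall (0:E3) s₀ := by
      rw [Metric.mem_closedBall, dist_self]; linarith
    have := hA Q₀ hQ₀ ⟨0, h0, h0'⟩
    linarith [hC.radius_ge_one Q₀ hQ₀]
  have hκc0 : κ < L61.c0 := L61.kappa_lt hC hκ hκcond hs₀R hs₀0 hA hR₁1
  have hc0 := L61.c0_pos
  refine ⟨L * (R₁ + s₀ + 1), ?_⟩
  intro n hn
  have hn0 : (0:ℝ) < n := by nlinarith
  have hn3 : R₁ + s₀ + 1 ≤ n / L := by
    rw [le_div_iff₀ hL0]; nlinarith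
  have hR₁n : R₁ ≤ n := by nlinarith
  have hnL2 : n / L ≤ n / 2 := div_le_div_of_nonneg_left hn0.le (by norm_num) hL2
  -- Step 1 : radius bound for balls meeting the annulus
  have hsize : ∀ B, B ∈ 𝒞 →
      (ballSet B ∩ (Metric.closedBall (0:E3) (2*n) \ Metric.ball (0:E3) n)).Nonempty →
      B.2 ≤ 20 * P^15 * n := by
    intro B hB hint
    by_contra hbig
    push_neg at hbig
    obtain ⟨p, hpB, hpAnn⟩ := hint
    have hp2n : ‖p‖ ≤ 2*n := by
      have h := hpAnn.1
      rwa [Metric.mem_closedBall, dist_zero_right] at h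
    have hmnB : L61.mn B ≤ 2*n := le_trans (L61.mn_le_of_mem hpB) hp2n
    have hb0 : (0:ℝ) < B.2 := lt_trans (by positivity) hbig
    have h20 : ∀ k : ℕ, k ≤ 15 → 20*n*P^k ≤ B.2 := by
      intro k hk
      have h1 := mul_le_mul_of_nonneg_left (pow_le_pow_right₀ hP1 hk)
        (by positivity : (0:ℝ) ≤ 20*n)
      nlinarith [hbig]
    have bandk : ∀ k : ℕ, 1 ≤ k → k ≤ 14 →
        ∃ C, C ∈ 𝒞 ∧ L61.mn C ≤ 2*n ∧ B.2/P^(k+1) ≤ C.2 ∧ C.2 < B.2/P^k := by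
      intro k hk1 hk14
      have hPk : (0:ℝ) < P^k := pow_pos hP0 k
      have hβ : 20*(1+η)*n ≤ B.2/P^k := by
        rw [← hPdef, le_div_iff₀ hPk]
        have h2 : 20*P*n*P^k = 20*n*P^(k+1) := by ring
        rw [h2]
        exact h20 (k+1) (by omega)
      obtain ⟨C, h1, h2, h3, h4⟩ := L61.band hC hs₀0 hA hR₁n hn0 hβ
        ⟨B, hB, hmnB, div_le_self hb0.le (one_le_pow₀ hP1)⟩
      refine ⟨C, h1, h2, ?_, h4⟩
      have heq : B.2/P^k/(1+η) = B.2/P^(k+1) := by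
        rw [← hPdef, div_div, ← pow_succ]
      rw [← heq]
      exact h3
    obtain ⟨C₁, hC₁, hmn₁, hlo₁, hhi₁⟩ := bandk 4 (by norm_num) (by norm_num)
    obtain ⟨C₂, hC₂, hmn₂, hlo₂, hhi₂⟩ := bandk 9 (by norm_num) (by norm_num)
    obtain ⟨C₃, hC₃, hmn₃, hlo₃, hhi₃⟩ := bandk 14 (by norm_num) (by norm_num)
    -- lower bounds 20 n
    have hdiv20 : ∀ k : ℕ, k ≤ 15 → 20*n ≤ B.2/P^k := by
      intro k hk
      rw [le_div_iff₀ (pow_pos hP0 k)]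
      exact h20 k hk
    have h20B : 20*n ≤ B.2 := by
      have := hdiv20 0 (by norm_num)
      simpa using this
    have h20C₁ : 20*n ≤ C₁.2 := le_trans (hdiv20 5 (by norm_num)) hlo₁
    have h20C₂ : 20*n ≤ C₂.2 := le_trans (hdiv20 10 (by norm_num)) hlo₂
    have h20C₃ : 20*n ≤ C₃.2 := le_trans (hdiv20 15 (by norm_num)) hlo₃
    -- none contains the origin
    have hnot0 : ∀ V, V ∈ 𝒞 → 20*n ≤ V.2 → V.2 < ‖V.1‖ := by
      intro V hV h20V
      by_contra hle
      push_neg at hle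
      have h0V : (0:E3) ∈ ballSet V := by
        rw [L61.mem_ballSet, dist_zero_left]
        exact hle
      have h0K : (0:E3) ∈ Metric.closedBall (0:E3) s₀ := by
        rw [Metric.mem_closedBall, dist_self]; linarith
      have := hA V hV ⟨0, h0V, h0K⟩
      linarith
    -- pairwise disjointness
    have hdisj : ∀ V W : BallData, V ∈ 𝒞 → W ∈ 𝒞 → η * W.2 < V.2 →
        V.2 + W.2 < dist V.1 W.1 := by
      intro V W hV hW hratio
      have hrV := hC.radius_ge_one V hV
      have hrW := hC.radius_ge_one W hW
      by_contra hle
      push_neg at hle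
      have hintVW : (ballSet V ∩ ballSet W).Nonempty :=
        L61.inter_of_dist (by linarith) (by linarith) hle
      have := L61.radius_le hC hV hW hintVW
      linarith
    have hpair : ∀ (X Y : BallData) (j k : ℕ), j + 1 ≤ k → 0 ≤ Y.2 →
        B.2/P^j ≤ X.2 → Y.2 < B.2/P^k → η * Y.2 < X.2 := by
      intro X Y j k hjk hY0 hX hY
      have h1 : η*Y.2 ≤ P*Y.2 := mul_le_mul_of_nonneg_right (by rw [hPdef]; linarith) hY0
      have h2 : P*Y.2 < P*(B.2/P^k) := mul_lt_mul_of_pos_left hY hP0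
      have h3 : P*(B.2/P^k) ≤ B.2/P^j := by
        rw [mul_div_assoc', div_le_div_iff₀ (pow_pos hP0 k) (pow_pos hP0 j)]
        calc P*B.2*P^j = B.2*P^(j+1) := by rw [pow_succ]; ring
          _ ≤ B.2*P^k := mul_le_mul_of_nonneg_left (pow_le_pow_right₀ hP1 hjk) hb0.le
      linarith
    have hrC₁ := hC.radius_ge_one C₁ hC₁
    have hrC₂ := hC.radius_ge_one C₂ hC₂
    have hrC₃ := hC.radius_ge_one C₃ hC₃
    have hB0div : B.2/P^(0:ℕ) ≤ B.2 := by simp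
    have r12 : η * C₁.2 < B.2 := hpair B C₁ 0 4 (by norm_num) (by linarith) hB0div hhi₁
    have r13 : η * C₂.2 < B.2 := hpair B C₂ 0 9 (by norm_num) (by linarith) hB0div hhi₂
    have r14 : η * C₃.2 < B.2 := hpair B C₃ 0 14 (by norm_num) (by linarith) hB0div hhi₃
    have r23 : η * C₂.2 < C₁.2 := hpair C₁ C₂ 5 9 (by norm_num) (by linarith) hlo₁ hhi₂
    have r24 : η * C₃.2 < C₁.2 := hpair C₁ C₃ 5 14 (by norm_num) (by linarith) hlo₁ hhi₃
    have r34 : η * C₃.2 < C₂.2 := hpair C₂ C₃ 10 14 (by norm_num) (by linarith) hlo₂ hhi₃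
    have d12 := hdisj B C₁ hB hC₁ r12
    have d13 := hdisj B C₂ hB hC₂ r13
    have d14 := hdisj B C₃ hB hC₃ r14
    have d23 := hdisj C₁ C₂ hC₁ hC₂ r23
    have d24 := hdisj C₁ C₃ hC₁ hC₃ r24
    have d34 := hdisj C₂ C₃ hC₂ hC₃ r34
    have nB := hnot0 B hB h20B
    have nC₁ := hnot0 C₁ hC₁ h20C₁
    have nC₂ := hnot0 C₂ hC₂ h20C₂
    have nC₃ := hnot0 C₃ hC₃ h20C₃
    have mB : ‖B.1‖ - B.2 ≤ 2*n := hmnB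
    have mC₁ : ‖C₁.1‖ - C₁.2 ≤ 2*n := hmn₁
    have mC₂ : ‖C₂.1‖ - C₂.2 ≤ 2*n := hmn₂
    have mC₃ : ‖C₃.1‖ - C₃.2 ≤ 2*n := hmn₃
    exact L61.no_four (by linarith) (by linarith) (by linarith) (by linarith)
      (L61.anti hn0 nB nC₁ mB mC₁ h20B h20C₁ d12)
      (L61.anti hn0 nB nC₂ mB mC₂ h20B h20C₂ d13)
      (L61.anti hn0 nB nC₃ mB mC₃ h20B h20C₃ d14)
      (L61.anti hn0 nC₁ nC₂ mC₁ mC₂ h20C₁ h20C₂ d23)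
      (L61.anti hn0 nC₁ nC₃ mC₁ mC₃ h20C₁ h20C₃ d24)
      (L61.anti hn0 nC₂ nC₃ mC₂ mC₃ h20C₂ h20C₃ d34)
  -- Step 2 : the two pointwise conclusions
  have hpart : ∀ B, B ∈ 𝒞 →
      (ballSet B ∩ (Metric.closedBall (0:E3) (2*n) \ Metric.ball (0:E3) n)).Nonempty →
      ballSet B ⊆ Metric.closedBall (0:E3) (L*n) ∧ n / L ≤ ‖B.1‖ := by
    intro B hB hint
    obtain ⟨p, hpB, hpAnn⟩ := hint
    have hp2n : ‖p‖ ≤ 2*n := by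
      have h := hpAnn.1
      rwa [Metric.mem_closedBall, dist_zero_right] at h
    have hpn : n ≤ ‖p‖ := by
      have h := hpAnn.2
      rw [Metric.mem_ball, dist_zero_right] at h
      exact not_lt.mp h
    have hsz := hsize B hB ⟨p, hpB, hpAnn⟩
    have hxb : ‖B.1‖ ≤ 2*n + B.2 := by
      have h2 := L61.norm_center_le hpB
      linarith
    constructor
    · intro q hq
      rw [Metric.mem_closedBall, dist_zero_right]
      have h3 : ‖q‖ ≤ ‖B.1‖ + B.2 := L61.norm_le_of_mem hq
      have h4 : 2 + 40*P^15 ≤ 60*P^16 := by nlinarith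
      calc ‖q‖ ≤ (2 + 40*P^15)*n := by nlinarith
        _ ≤ (60*P^16)*n := mul_le_mul_of_nonneg_right h4 hn0.le
        _ = L*n := by rw [hLdef]
    · by_contra hxs
      push_neg at hxs
      have hrB : n/2 ≤ B.2 := by
        have h2 : ‖p‖ ≤ ‖B.1‖ + B.2 := L61.norm_le_of_mem hpB
        linarith
      have h0B : (0:E3) ∈ ballSet B := by
        rw [L61.mem_ballSet, dist_zero_left]
        linarith
      have h0K : (0:E3) ∈ Metric.closedBall (0:E3) s₀ := by
        rw [Metric.mem_closedBall, dist_self]; linarith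
      have := hA B hB ⟨0, h0B, h0K⟩
      nlinarith
  -- Step 3 : finiteness
  have hFamfin : {B | B ∈ 𝒞 ∧
      (ballSet B ∩ (Metric.closedBall (0:E3) (2*n) \ Metric.ball (0:E3) n)).Nonempty}.Finite := by
    apply (L61.locfin hC 0 (by positivity : (0:ℝ) ≤ 2*n)).subset
    rintro B ⟨hB, p, hp1, hp2⟩
    exact ⟨hB, p, hp1, hp2.1⟩
  refine ⟨fun B hB hint => hpart B hB hint, hFamfin, ?_⟩
  -- Step 4 : counting
  set u : ℝ := κ*n/(2*L61.c0*L) with hu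
  have hu0 : (0:ℝ) < u := by rw [hu]; positivity
  have hsmall : ∀ V ∈ hFamfin.toFinset, ∃ m : E3,
      Metric.closedBall m u ⊆ ballSet V ∩ Metric.closedBall (0:E3) (3*n) := by
    intro V hV
    rw [Set.Finite.mem_toFinset] at hV
    obtain ⟨hV𝒞, p, hp1, hp2⟩ := hV
    have hxV : n/L ≤ ‖V.1‖ := (hpart V hV𝒞 ⟨p, hp1, hp2⟩).2
    have hR₀x : R₀ ≤ ‖V.1‖ := by
      have h1 : n/L ≥ R₁ + s₀ + 1 := hn3
      linarith
    have hκV := hκcond V hV𝒞 hR₀x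
    rw [L61.vol13 V (by linarith [hC.radius_ge_one V hV𝒞])] at hκV
    have h2u : 2*u ≤ V.2 := by
      have hmul := mul_le_mul_of_nonneg_right
        (le_trans (mul_le_mul_of_nonneg_left hxV hκ.le) hκV) hL0.le
      have he1 : κ*(n/L)*L = κ*n := by field_simp
      rw [he1] at hmul
      rw [hu]
      rw [show 2*(κ*n/(2*L61.c0*L)) = κ*n/(L61.c0*L) by field_simp]
      rw [div_le_iff₀ (by positivity)]
      nlinarith [hmul]
    have hup : u ≤ V.2 := by linarith
    obtain ⟨m, hmsub, hmp⟩ := L61.smallball_subset hp1 hu0 hup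
    refine ⟨m, fun q hq => ⟨hmsub hq, ?_⟩⟩
    have hq1 : dist q m ≤ u := hq
    have hun : 2*u ≤ n := by
      rw [hu, show 2*(κ*n/(2*L61.c0*L)) = κ*n/(L61.c0*L) by field_simp]
      rw [div_le_iff₀ (by positivity)]
      have hA1 : κ*n ≤ L61.c0*n := by nlinarith
      have hA2 : L61.c0*n ≤ L61.c0*L*n := by
        nlinarith [mul_nonneg hc0.le hn0.le, hL2]
      nlinarith
    have hp2n : ‖p‖ ≤ 2*n := by
      have h := hp2.1
      rwa [Metric.mem_closedBall, dist_zero_right] at h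
    rw [Metric.mem_closedBall]
    calc dist q (0:E3) ≤ dist q m + dist m p + dist p (0:E3) := dist_triangle4 _ _ _ _
      _ ≤ u + u + 2*n := by
          rw [dist_zero_right]
          exact add_le_add (add_le_add hq1 hmp) hp2n
      _ ≤ 3*n := by linarith
  have hcount := L61.count hC hσ hFamfin.toFinset
    (fun V hV => ((Set.Finite.mem_toFinset _).mp hV).1) hu0
    (by positivity : (0:ℝ) ≤ 3*n) hsmall
  rw [Set.ncard_eq_toFinset_card _ hFamfin]
  rw [le_div_iff₀ (by positivity : (0:ℝ) < κ^3)]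
  set N : ℝ := (hFamfin.toFinset.card : ℝ) with hN
  have hc3 : L61.c0^3 = 4*Real.pi/3 := L61.c0_cube
  have hun3 : u^3 * (2*L61.c0*L)^3 = κ^3*n^3 := by
    rw [hu, div_pow, div_mul_cancel₀ _ (by positivity : (2*L61.c0*L)^3 ≠ 0)]
    ring
  have hstep : N * (κ^3*n^3) ≤ (σ+1)*(3*n)^3*(2*L61.c0*L)^3 := by
    calc N * (κ^3*n^3) = (N * u^3) * (2*L61.c0*L)^3 := by rw [← hun3]; ring
      _ ≤ ((σ+1)*(3*n)^3) * (2*L61.c0*L)^3 :=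
          mul_le_mul_of_nonneg_right hcount (by positivity)
      _ = (σ+1)*(3*n)^3*(2*L61.c0*L)^3 := by ring
  have hn3pos : (0:ℝ) < n^3 := by positivity
  have hfin2 : N * κ^3 ≤ (σ+1)*216*(4*Real.pi/3)*L^3 := by
    have hexp : (σ+1)*(3*n)^3*(2*L61.c0*L)^3 = ((σ+1)*216*(4*Real.pi/3)*L^3)*n^3 := by
      rw [show (2*L61.c0*L)^3 = 8*L61.c0^3*L^3 by ring, hc3]
      ring
    rw [hexp, show N * (κ^3*n^3) = (N*κ^3)*n^3 by ring] at hstep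
    exact le_of_mul_le_mul_right hstep hn3pos
  have hπ : (0:ℝ) < Real.pi := Real.pi_pos
  have hL3' : (432:ℝ) ≤ L^3 := by
    nlinarith [hL60, mul_nonneg (sub_nonneg.mpr hL60) (sq_nonneg L),
      mul_nonneg (sub_nonneg.mpr hL60) (by linarith : (0:ℝ) ≤ L)]
  have hL3 : 432*L^3 ≤ L^6 := by
    nlinarith [mul_le_mul_of_nonneg_right hL3' (by positivity : (0:ℝ) ≤ L^3)]
  have hs1 : (σ+1)*216*(4*Real.pi/3)*L^3 ≤ 2*σ*216*(4*Real.pi/3)*L^3 := by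
    have : σ + 1 ≤ 2*σ := by linarith
    have h0 : (0:ℝ) ≤ 216*(4*Real.pi/3)*L^3 := by positivity
    linarith [mul_le_mul_of_nonneg_right this h0]
  have hs2 : 2*σ*216*(4*Real.pi/3)*L^3 ≤ 4*Real.pi/3*σ*L^6 := by
    have h0 : (0:ℝ) ≤ (4*Real.pi/3)*σ := by positivity
    linarith [mul_le_mul_of_nonneg_left hL3 h0]
  linarith

end
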